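/- arXiv:2207.04466 — 7 statements merged into one kernel-verified Lean document; each statement's English description precedes it below -/
import Mathlib

section
/- Let r ≥ 1 and let n₁,…,n_r, μ₁,…,μ_r be positive integers. Equip H = ⊕ᵢ₌₁ʳ (ℂ^{nᵢ} ⊗ ℂ^{μᵢ}) with the orthogonal direct sum of the tensor-product Hermitian inner products, and represent the algebra A = ⊕ᵢ₌₁ʳ M_{nᵢ}(ℂ) on H by π(⊕ᵢ aᵢ)(⊕ᵢ ξᵢ ⊗ vᵢ) = ⊕ᵢ (aᵢ ξᵢ) ⊗ vᵢ. If γ : H → H is a complex-linear map with γ† = γ (adjoint with respect to the inner product), γ² = id, and γ ∘ π(a) = π(a) ∘ γ for all a ∈ A, then there exists a family of linear maps ℓᵢ : ℂ^{μᵢ} → ℂ^{μᵢ} with ℓᵢ† = ℓᵢ and ℓᵢ² = id such that γ(ξᵢ ⊗ vᵢ) = ξᵢ ⊗ ℓᵢ(vᵢ) for every i and every ξᵢ ⊗ vᵢ ∈ ℂ^{nᵢ} ⊗ ℂ^{μᵢ}. -/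
/-- The embedding of the pure tensor `ξ ⊗ v` into the `i`-th summand of
`⊕ᵢ ℂ^{nᵢ} ⊗ ℂ^{μᵢ}`, realized as `EuclideanSpace ℂ (Σ i, Fin (n i) × Fin (μ i))`. -/
noncomputable def embA {r : ℕ} (n μ : Fin r → ℕ) (i : Fin r)
    (ξ : Fin (n i) → ℂ) (v : Fin (μ i) → ℂ) :
    EuclideanSpace ℂ (Σ j : Fin r, Fin (n j) × Fin (μ j)) :=
  WithLp.toLp 2 (fun x => if h : x.1 = i then
      ξ (Fin.cast (congrArg n h) x.2.1) * v (Fin.cast (congrArg μ h) x.2.2)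
    else 0)

/-! Write `T_ξ v = ξ ⊗ v` for the embedding of `ℂ^{μᵢ}` into the `i`-th summand, an isometry
when `ξ = e_p`. The block matrix `ξ e_pᵀ` in the `i`-th summand of `A` acts through
`π = blockRep` as `T_ξ T_{e_p}†`, so commuting with it gives `γ T_ξ = T_ξ (T_{e_p}† γ T_{e_p})`.
Hence `ℓᵢ := T_{e_p}† γ T_{e_p}` works for any fixed `p`: it is self-adjoint because `γ` is, and
an involution because `γ² = 1` and `T_{e_p}† T_{e_p} = 1`. -/

theorem LinearMap.comp_self_eq_id_of_comp_eq {R M N : Type*} [Semiring R] [AddCommMonoid M]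
    [AddCommMonoid N] [Module R M] [Module R N] {S : N →ₗ[R] M} {T : M →ₗ[R] N}
    {γ : N →ₗ[R] N} {ℓ : M →ₗ[R] M} (hST : S ∘ₗ T = LinearMap.id) (hγT : γ ∘ₗ T = T ∘ₗ ℓ)
    (hγ : γ ∘ₗ γ = LinearMap.id) : ℓ ∘ₗ ℓ = LinearMap.id :=
  calc ℓ ∘ₗ ℓ = S ∘ₗ (T ∘ₗ ℓ) ∘ₗ ℓ := by
        simp only [← LinearMap.comp_assoc, hST, LinearMap.id_comp]
    _ = S ∘ₗ γ ∘ₗ γ ∘ₗ T := by rw [← hγT, LinearMap.comp_assoc, ← hγT]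
    _ = LinearMap.id := by rw [← LinearMap.comp_assoc T γ γ, hγ, LinearMap.id_comp, hST]

section
variable {r : ℕ} (n μ : Fin r → ℕ)

local notation "𝓗" => EuclideanSpace ℂ (Σ j : Fin r, Fin (n j) × Fin (μ j))

noncomputable def blockRep (a : ∀ j, Matrix (Fin (n j)) (Fin (n j)) ℂ) (ψ : 𝓗) : 𝓗 :=
  WithLp.toLp 2 fun x => ∑ p', a x.1 x.2.1 p' * ψ ⟨x.1, (p', x.2.2)⟩

noncomputable def embALin (i : Fin r) (ξ : Fin (n i) → ℂ) :
    EuclideanSpace ℂ (Fin (μ i)) →ₗ[ℂ] 𝓗 where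
  toFun v := embA n μ i ξ v
  map_add' v w := by
    ext x
    simp only [embA, PiLp.add_apply, PiLp.toLp_apply]
    split_ifs <;> ring
  map_smul' c v := by
    ext x
    simp only [embA, PiLp.smul_apply, PiLp.toLp_apply, smul_eq_mul, RingHom.id_apply]
    split_ifs <;> ring

variable {n μ}

@[simp]
lemma embALin_apply (i : Fin r) (ξ : Fin (n i) → ℂ) (v : EuclideanSpace ℂ (Fin (μ i))) :
    embALin n μ i ξ v = embA n μ i ξ v :=
  rfl

@[simp]
lemma embA_apply_self (i : Fin r) (ξ : Fin (n i) → ℂ) (v : Fin (μ i) → ℂ)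
    (s : Fin (n i)) (q : Fin (μ i)) :
    embA n μ i ξ v ⟨i, (s, q)⟩ = ξ s * v q := by
  simp [embA]

lemma embA_single_single (i : Fin r) (p : Fin (n i)) (u : Fin (μ i)) :
    embA n μ i (Pi.single p 1) (Pi.single u 1) = EuclideanSpace.single ⟨i, (p, u)⟩ 1 := by
  ext ⟨j, t, w⟩
  rcases eq_or_ne j i with rfl | hj
  · by_cases ht : t = p <;> by_cases hw : w = u <;> simp [ht, hw]
  · simp [embA, hj]

lemma adjoint_embALin_single_apply (i : Fin r) (p : Fin (n i)) (φ : 𝓗) (u : Fin (μ i)) :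
    LinearMap.adjoint (embALin n μ i (Pi.single p 1)) φ u = φ ⟨i, (p, u)⟩ := by
  set T := embALin n μ i (Pi.single p 1)
  calc LinearMap.adjoint T φ u = inner ℂ (EuclideanSpace.single u 1) (LinearMap.adjoint T φ) := by
        simp [EuclideanSpace.inner_single_left]
    _ = inner ℂ (EuclideanSpace.single ⟨i, (p, u)⟩ 1) φ := by
        rw [LinearMap.adjoint_inner_right]
        exact congrArg (inner ℂ · φ) (embA_single_single i p u)
    _ = φ ⟨i, (p, u)⟩ := by simp [EuclideanSpace.inner_single_left]

lemma adjoint_embALin_single_comp_self (i : Fin r) (p : Fin (n i)) :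
    LinearMap.adjoint (embALin n μ i (Pi.single p 1)) ∘ₗ embALin n μ i (Pi.single p 1) =
      LinearMap.id := by
  ext v u
  simp [adjoint_embALin_single_apply]

lemma blockRep_single_vecMulVec (i : Fin r) (ξ : Fin (n i) → ℂ) (p : Fin (n i)) (φ : 𝓗) :
    blockRep n μ (Pi.single i (Matrix.vecMulVec ξ (Pi.single p 1))) φ =
      embALin n μ i ξ (LinearMap.adjoint (embALin n μ i (Pi.single p 1)) φ) := by
  ext ⟨j, t, u⟩
  rcases eq_or_ne j i with rfl | hj
  · simp [blockRep, adjoint_embALin_single_apply, Matrix.vecMulVec_apply, Pi.single_apply]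
  · simp [blockRep, embA, hj]

lemma comp_embALin_of_commute (γ : 𝓗 →ₗ[ℂ] 𝓗)
    (hγ : ∀ a ψ, γ (blockRep n μ a ψ) = blockRep n μ a (γ ψ))
    (i : Fin r) (p : Fin (n i)) (ξ : Fin (n i) → ℂ) :
    γ ∘ₗ embALin n μ i ξ = embALin n μ i ξ ∘ₗ
      (LinearMap.adjoint (embALin n μ i (Pi.single p 1)) ∘ₗ γ ∘ₗ embALin n μ i (Pi.single p 1)) := by
  ext1 w
  have hw : embALin n μ i ξ w =
      blockRep n μ (Pi.single i (Matrix.vecMulVec ξ (Pi.single p 1)))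
        (embALin n μ i (Pi.single p 1) w) := by
    rw [blockRep_single_vecMulVec, ← LinearMap.comp_apply (LinearMap.adjoint _),
      adjoint_embALin_single_comp_self, LinearMap.id_apply]
  rw [LinearMap.comp_apply, hw, hγ, blockRep_single_vecMulVec]
  rfl

end

theorem statement2_general (r : ℕ) (n μ : Fin r → ℕ)
    (hn : ∀ i, 1 ≤ n i)
    (γ : EuclideanSpace ℂ (Σ j : Fin r, Fin (n j) × Fin (μ j)) →ₗ[ℂ]
         EuclideanSpace ℂ (Σ j : Fin r, Fin (n j) × Fin (μ j)))
    (hsa : LinearMap.adjoint γ = γ)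
    (hsq : γ ∘ₗ γ = LinearMap.id)
    (hcomm : ∀ (a : ∀ j : Fin r, Matrix (Fin (n j)) (Fin (n j)) ℂ)
        (ψ : EuclideanSpace ℂ (Σ j : Fin r, Fin (n j) × Fin (μ j))),
      γ (WithLp.toLp 2 (fun x : (Σ j : Fin r, Fin (n j) × Fin (μ j)) =>
            ∑ p', a x.1 x.2.1 p' * ψ ⟨x.1, (p', x.2.2)⟩))
        = fun x : (Σ j : Fin r, Fin (n j) × Fin (μ j)) =>
            ∑ p', a x.1 x.2.1 p' * (γ ψ) ⟨x.1, (p', x.2.2)⟩) :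
    ∃ ℓ : (i : Fin r) → (EuclideanSpace ℂ (Fin (μ i)) →ₗ[ℂ] EuclideanSpace ℂ (Fin (μ i))),
      (∀ i, LinearMap.adjoint (ℓ i) = ℓ i) ∧
      (∀ i, ℓ i ∘ₗ ℓ i = LinearMap.id) ∧
      (∀ (i : Fin r) (ξ : Fin (n i) → ℂ) (v : Fin (μ i) → ℂ),
        γ (embA n μ i ξ v) = embA n μ i ξ (ℓ i (WithLp.toLp 2 v))) := by
  have hγ : ∀ a ψ, γ (blockRep n μ a ψ) = blockRep n μ a (γ ψ) := fun a ψ =>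
    WithLp.ofLp_injective 2 (hcomm a ψ)
  let p i : Fin (n i) := ⟨0, hn i⟩
  let T i := embALin n μ i (Pi.single (p i) 1)
  refine ⟨fun i => LinearMap.adjoint (T i) ∘ₗ γ ∘ₗ T i, fun i => ?_, fun i => ?_,
    fun i ξ v => LinearMap.congr_fun (comp_embALin_of_commute γ hγ i (p i) ξ) (WithLp.toLp 2 v)⟩
  · simp only [LinearMap.adjoint_comp, LinearMap.adjoint_adjoint, hsa, LinearMap.comp_assoc]
  · exact LinearMap.comp_self_eq_id_of_comp_eq (adjoint_embALin_single_comp_self i (p i))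
      (comp_embALin_of_commute γ hγ i (p i) _) hsq

/-- A grading `γ` (self-adjoint involution commuting with the representation
of `A = ⊕ᵢ M_{nᵢ}(ℂ)` on `H = ⊕ᵢ ℂ^{nᵢ} ⊗ ℂ^{μᵢ}`) reduces to a family of self-adjoint
involutions `ℓᵢ` on the multiplicity spaces: `γ(ξ ⊗ v) = ξ ⊗ ℓᵢ(v)`. -/
theorem statement2 (r : ℕ) (hr : 1 ≤ r) (n μ : Fin r → ℕ)
    (hn : ∀ i, 1 ≤ n i) (hμ : ∀ i, 1 ≤ μ i)
    (γ : EuclideanSpace ℂ (Σ j : Fin r, Fin (n j) × Fin (μ j)) →ₗ[ℂ]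
         EuclideanSpace ℂ (Σ j : Fin r, Fin (n j) × Fin (μ j)))
    (hsa : LinearMap.adjoint γ = γ)
    (hsq : γ ∘ₗ γ = LinearMap.id)
    (hcomm : ∀ (a : ∀ j : Fin r, Matrix (Fin (n j)) (Fin (n j)) ℂ)
        (ψ : EuclideanSpace ℂ (Σ j : Fin r, Fin (n j) × Fin (μ j))),
      γ (WithLp.toLp 2 (fun x : (Σ j : Fin r, Fin (n j) × Fin (μ j)) =>
            ∑ p', a x.1 x.2.1 p' * ψ ⟨x.1, (p', x.2.2)⟩))
        = fun x : (Σ j : Fin r, Fin (n j) × Fin (μ j)) =>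
            ∑ p', a x.1 x.2.1 p' * (γ ψ) ⟨x.1, (p', x.2.2)⟩) :
    ∃ ℓ : (i : Fin r) → (EuclideanSpace ℂ (Fin (μ i)) →ₗ[ℂ] EuclideanSpace ℂ (Fin (μ i))),
      (∀ i, LinearMap.adjoint (ℓ i) = ℓ i) ∧
      (∀ i, ℓ i ∘ₗ ℓ i = LinearMap.id) ∧
      (∀ (i : Fin r) (ξ : Fin (n i) → ℂ) (v : Fin (μ i) → ℂ),
        γ (embA n μ i ξ v) = embA n μ i ξ (ℓ i (WithLp.toLp 2 v))) :=
  statement2_general r n μ hn γ hsa hsq hcomm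
end

section
/- Let H_A and H_B be finite-dimensional complex Hilbert spaces and φ_H : H_A → H_B a nonzero linear map, with R = Ran(φ_H), P the orthogonal projection of H_B onto R, and R^⊥ the orthogonal complement. Let J_A be an antiunitary operator on H_A with J_A² = ε_A·id and J_B an antiunitary operator on H_B with J_B² = ε_B·id, where ε_A, ε_B ∈ {+1, −1}, and suppose J_B is strongly φ-compatible with J_A, i.e. φ_H ∘ J_A = J_B ∘ φ_H. Then: (1) ε_A = ε_B; (2) J_B⁻¹ is strongly φ-compatible with J_A⁻¹, i.e. φ_H ∘ J_A⁻¹ = J_B⁻¹ ∘ φ_H; (3) J_B(R) = R and J_B(R^⊥) ⊆ R^⊥; (4) if operators A on H_A and B on H_B are φ-compatible (φ_H ∘ A = P ∘ B ∘ φ_H), then J_A A J_A⁻¹ and J_B B J_B⁻¹ are φ-compatible (φ_H ∘ (J_A A J_A⁻¹) = P ∘ (J_B B J_B⁻¹) ∘ φ_H). -/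
/-!
Everything follows from the intertwining relation `φ ∘ J_A = J_B ∘ φ`. Applying it twice
gives `ε_A • φ ψ = ε_B • φ ψ`, so `ε_A = ε_B` as soon as `φ ψ ≠ 0`. Surjectivity of `J_A`
gives `J_B(R) = R`; antiunitarity then turns `⟪J_B r, J_B x⟫ = ⟪x, r⟫` into
`J_B(R^⊥) ⊆ R^⊥`. An additive map preserving both `R` and `R^⊥` commutes with the orthogonal
projection `P`, which gives the compatibility of the conjugated operators.
-/

open Function

theorem Function.Semiconj.eq_of_iterate_two_eq_smul {K V W : Type*} [Field K]
    [AddCommGroup V] [Module K V] [AddCommGroup W] [Module K W]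
    {φ : V →ₗ[K] W} {JV : V → V} {JW : W → W} (h : Semiconj φ JV JW) (hφ : φ ≠ 0)
    {a b : K} (hJV : ∀ v, JV (JV v) = a • v) (hJW : ∀ w, JW (JW w) = b • w) : a = b := by
  obtain ⟨v, hv⟩ : ∃ v, φ v ≠ 0 := by
    by_contra! h0
    exact hφ (LinearMap.ext h0)
  have hab : a • φ v = b • φ v := by
    rw [← map_smul, ← hJV, h, h, hJW]
  exact smul_left_injective K hv hab

theorem Function.Semiconj.image_range_eq {α β : Type*} {f : α → β} {ga : α → α}
    {gb : β → β} (h : Semiconj f ga gb) (hga : Surjective ga) :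
    gb '' Set.range f = Set.range f := by
  rw [← Set.image_univ, ← Set.image_comp, ← h.comp_eq, Set.image_comp,
    Set.image_univ_of_surjective hga]

section InnerProductSpace

variable {𝕜 E : Type*} [RCLike 𝕜] [NormedAddCommGroup E] [InnerProductSpace 𝕜 E]

theorem Submodule.mapsTo_orthogonal_of_subset_image {J : E → E}
    (hJ : ∀ x y, inner 𝕜 (J x) (J y) = inner 𝕜 y x) {K : Submodule 𝕜 E}
    (hK : (K : Set E) ⊆ J '' K) : Set.MapsTo J Kᗮ Kᗮ := by
  intro x hx
  rw [SetLike.mem_coe, Submodule.mem_orthogonal]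
  intro r hr
  obtain ⟨r', hr', rfl⟩ := hK hr
  rw [hJ, inner_eq_zero_symm]
  exact hx r' hr'

theorem Submodule.map_starProjection_of_mapsTo {σ : 𝕜 →+* 𝕜} (J : E →ₛₗ[σ] E)
    (K : Submodule 𝕜 E) [K.HasOrthogonalProjection] (hK : Set.MapsTo J K K)
    (hKperp : Set.MapsTo J Kᗮ Kᗮ) (w : E) :
    J (K.starProjection w) = K.starProjection (J w) := by
  symm
  refine Submodule.eq_starProjection_of_mem_orthogonal' (hK (K.starProjection_apply_mem w))
    (hKperp (K.sub_starProjection_mem_orthogonal w)) ?_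
  rw [← map_add, add_sub_cancel]

end InnerProductSpace

theorem statement12_general {HA HB : Type*}
    [NormedAddCommGroup HA] [InnerProductSpace ℂ HA]
    [NormedAddCommGroup HB] [InnerProductSpace ℂ HB] [FiniteDimensional ℂ HB]
    (φH : HA →ₗ[ℂ] HB) (hφH_ne : φH ≠ 0)
    (JA : HA →ₗ⋆[ℂ] HA) (JB : HB →ₗ⋆[ℂ] HB)
    (hJA_bij : Function.Bijective JA)
    (hJB_anti : ∀ ψ₁ ψ₂ : HB, (inner ℂ (JB ψ₁) (JB ψ₂) : ℂ) = inner ℂ ψ₂ ψ₁)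
    (εA εB : ℝ)
    (hJA2 : ∀ ψ, JA (JA ψ) = (εA : ℂ) • ψ)
    (hJB2 : ∀ ψ, JB (JB ψ) = (εB : ℂ) • ψ)
    (hstrong : ∀ ψ, φH (JA ψ) = JB (φH ψ)) :
    εA = εB ∧
    (∀ (JA' : HA →ₗ⋆[ℂ] HA) (JB' : HB →ₗ⋆[ℂ] HB),
      (∀ ψ, JA' (JA ψ) = ψ) → (∀ ψ, JA (JA' ψ) = ψ) →
      (∀ ψ, JB' (JB ψ) = ψ) → (∀ ψ, JB (JB' ψ) = ψ) →
      ∀ ψ, φH (JA' ψ) = JB' (φH ψ)) ∧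
    (JB '' (LinearMap.range φH : Set HB) = (LinearMap.range φH : Set HB)) ∧
    (∀ x ∈ (LinearMap.range φH)ᗮ, JB x ∈ (LinearMap.range φH)ᗮ) ∧
    (∀ (A : HA →ₗ[ℂ] HA) (B : HB →ₗ[ℂ] HB),
      (∀ ψ, φH (A ψ) = (Submodule.orthogonalProjection (LinearMap.range φH) (B (φH ψ)) : HB)) →
      ∀ (JA' : HA →ₗ⋆[ℂ] HA) (JB' : HB →ₗ⋆[ℂ] HB),
        (∀ ψ, JA' (JA ψ) = ψ) → (∀ ψ, JA (JA' ψ) = ψ) →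
        (∀ ψ, JB' (JB ψ) = ψ) → (∀ ψ, JB (JB' ψ) = ψ) →
        ∀ ψ, φH (JA (A (JA' ψ)))
          = (Submodule.orthogonalProjection (LinearMap.range φH) (JB (B (JB' (φH ψ)))) : HB)) := by
  have hsemi : Semiconj φH JA JB := hstrong
  have hε : (εA : ℂ) = εB := hsemi.eq_of_iterate_two_eq_smul hφH_ne hJA2 hJB2
  have hinv {JA' : HA →ₗ⋆[ℂ] HA} {JB' : HB →ₗ⋆[ℂ] HB} (hA : RightInverse JA' JA)
      (hB : LeftInverse JB' JB) : Semiconj φH JA' JB' :=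
    hsemi.inverses_right hA hB
  have himage : JB '' (LinearMap.range φH : Set HB) = LinearMap.range φH := by
    rw [LinearMap.coe_range]
    exact hsemi.image_range_eq hJA_bij.2
  have hperp : Set.MapsTo JB (LinearMap.range φH)ᗮ (LinearMap.range φH)ᗮ :=
    Submodule.mapsTo_orthogonal_of_subset_image hJB_anti himage.ge
  refine ⟨mod_cast hε, fun _ _ _ hA hB _ => hinv hA hB, himage, hperp, ?_⟩
  intro A B hAB JA' JB' _ hA hB _ ψ
  have hrange : Set.MapsTo JB (LinearMap.range φH) (LinearMap.range φH) :=
    Set.mapsTo_iff_image_subset.2 himage.le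
  rw [hstrong, hAB, ← hinv hA hB]
  exact Submodule.map_starProjection_of_mapsTo JB _ hrange hperp _

/-- Properties of a real structure `J_B` strongly φ-compatible with `J_A`:
(1) `ε_A = ε_B`; (2) the inverses are strongly φ-compatible; (3) `J_B` maps `R = Ran φ_H`
onto itself and preserves `R^⊥`; (4) conjugation by the real structures preserves
φ-compatibility of operators. Antiunitary maps are modeled as conjugate-linear maps. -/
theorem statement12 {HA HB : Type*}
    [NormedAddCommGroup HA] [InnerProductSpace ℂ HA] [FiniteDimensional ℂ HA]
    [NormedAddCommGroup HB] [InnerProductSpace ℂ HB] [FiniteDimensional ℂ HB]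
    (φH : HA →ₗ[ℂ] HB) (hφH_ne : φH ≠ 0)
    (JA : HA →ₗ⋆[ℂ] HA) (JB : HB →ₗ⋆[ℂ] HB)
    (hJA_bij : Function.Bijective JA) (hJB_bij : Function.Bijective JB)
    (hJA_anti : ∀ ψ₁ ψ₂ : HA, (inner ℂ (JA ψ₁) (JA ψ₂) : ℂ) = inner ℂ ψ₂ ψ₁)
    (hJB_anti : ∀ ψ₁ ψ₂ : HB, (inner ℂ (JB ψ₁) (JB ψ₂) : ℂ) = inner ℂ ψ₂ ψ₁)
    (εA εB : ℝ) (hεA : εA = 1 ∨ εA = -1) (hεB : εB = 1 ∨ εB = -1)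
    (hJA2 : ∀ ψ, JA (JA ψ) = (εA : ℂ) • ψ)
    (hJB2 : ∀ ψ, JB (JB ψ) = (εB : ℂ) • ψ)
    (hstrong : ∀ ψ, φH (JA ψ) = JB (φH ψ)) :
    εA = εB ∧
    (∀ (JA' : HA →ₗ⋆[ℂ] HA) (JB' : HB →ₗ⋆[ℂ] HB),
      (∀ ψ, JA' (JA ψ) = ψ) → (∀ ψ, JA (JA' ψ) = ψ) →
      (∀ ψ, JB' (JB ψ) = ψ) → (∀ ψ, JB (JB' ψ) = ψ) →
      ∀ ψ, φH (JA' ψ) = JB' (φH ψ)) ∧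
    (JB '' (LinearMap.range φH : Set HB) = (LinearMap.range φH : Set HB)) ∧
    (∀ x ∈ (LinearMap.range φH)ᗮ, JB x ∈ (LinearMap.range φH)ᗮ) ∧
    (∀ (A : HA →ₗ[ℂ] HA) (B : HB →ₗ[ℂ] HB),
      (∀ ψ, φH (A ψ) = (Submodule.orthogonalProjection (LinearMap.range φH) (B (φH ψ)) : HB)) →
      ∀ (JA' : HA →ₗ⋆[ℂ] HA) (JB' : HB →ₗ⋆[ℂ] HB),
        (∀ ψ, JA' (JA ψ) = ψ) → (∀ ψ, JA (JA' ψ) = ψ) →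
        (∀ ψ, JB' (JB ψ) = ψ) → (∀ ψ, JB (JB' ψ) = ψ) →
        ∀ ψ, φH (JA (A (JA' ψ)))
          = (Submodule.orthogonalProjection (LinearMap.range φH) (JB (B (JB' (φH ψ)))) : HB)) :=
  statement12_general φH hφH_ne JA JB hJA_bij hJB_anti εA εB hJA2 hJB2 hstrong
end

section
/- Let H_A and H_B be finite-dimensional complex Hilbert spaces, φ_H : H_A → H_B a linear map, R = Ran(φ_H), P the orthogonal projection of H_B onto R, and R^⊥ the orthogonal complement. Let γ_A be an operator on H_A and γ_B an operator on H_B with γ_A† = γ_A, γ_A² = id, γ_B† = γ_B, γ_B² = id, and suppose γ_B is φ-compatible with γ_A, i.e. φ_H(γ_A ψ) = P(γ_B(φ_H ψ)) for all ψ ∈ H_A. Then: (1) γ_B(R) ⊆ R and γ_B(R^⊥) ⊆ R^⊥, so γ_B is in fact strongly φ-compatible with γ_A (φ_H ∘ γ_A = γ_B ∘ φ_H); (2) φ_H maps the (+1)-eigenspace of γ_A into the (+1)-eigenspace of γ_B and the (−1)-eigenspace of γ_A into the (−1)-eigenspace of γ_B. -/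
/-!
A self-adjoint involution `γ_B` is an isometry. Write `v = γ_B (φ_H ψ)`; compatibility at `ψ`
and at `γ_A ψ` gives `φ_H (γ_A ψ) = P v` and `φ_H ψ = P (γ_B (P v))`, hence
`‖v‖ = ‖φ_H ψ‖ ≤ ‖P v‖ ≤ ‖v‖`. Equality in the contraction `‖P v‖ ≤ ‖v‖` forces `v ∈ R`,
so `P v = v` and compatibility is strong. Then `R` is `γ_B`-invariant, hence so is `R^⊥`
by self-adjointness, and the eigenspace statements are immediate.
-/

theorem LinearMap.IsSymmetric.norm_map_of_involutive {𝕜 E : Type*} [RCLike 𝕜]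
    [NormedAddCommGroup E] [InnerProductSpace 𝕜 E] {T : E →ₗ[𝕜] E} (hT : T.IsSymmetric)
    (hinv : Function.Involutive T) (x : E) : ‖T x‖ = ‖x‖ := by
  have hsq : ‖T x‖ ^ 2 = ‖x‖ ^ 2 := by
    rw [← inner_self_eq_norm_sq (𝕜 := 𝕜), ← inner_self_eq_norm_sq (𝕜 := 𝕜), hT, hinv]
  exact (sq_eq_sq₀ (norm_nonneg _) (norm_nonneg _)).1 hsq

section Compatibility

variable {𝕜 E F : Type*} [RCLike 𝕜] [NormedAddCommGroup F] [InnerProductSpace 𝕜 F]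
  {K : Submodule 𝕜 F} [K.HasOrthogonalProjection] {φ : E → F} {γA : E → E} {γB : F → F}

theorem mem_of_eq_starProjection_of_involutive (hγA : Function.Involutive γA)
    (hγB : ∀ w, ‖γB w‖ = ‖w‖) (hcompat : ∀ ψ, φ (γA ψ) = K.starProjection (γB (φ ψ)))
    (ψ : E) : γB (φ ψ) ∈ K := by
  set v := γB (φ ψ)
  have hφψ : φ ψ = K.starProjection (γB (K.starProjection v)) := by
    rw [← hcompat, ← hcompat, hγA]
  refine (K.mem_iff_norm_starProjection v).2 <| le_antisymm (K.norm_starProjection_apply_le v) ?_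
  calc ‖v‖ = ‖φ ψ‖ := hγB _
    _ ≤ ‖γB (K.starProjection v)‖ := hφψ ▸ K.norm_starProjection_apply_le _
    _ = ‖K.starProjection v‖ := hγB _

theorem eq_of_eq_starProjection_of_involutive (hγA : Function.Involutive γA)
    (hγB : ∀ w, ‖γB w‖ = ‖w‖) (hcompat : ∀ ψ, φ (γA ψ) = K.starProjection (γB (φ ψ)))
    (ψ : E) : φ (γA ψ) = γB (φ ψ) := by
  rw [hcompat, K.starProjection_eq_self_iff]
  exact mem_of_eq_starProjection_of_involutive hγA hγB hcompat ψ

end Compatibility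

theorem statement13_general {HA HB : Type*}
    [NormedAddCommGroup HA] [InnerProductSpace ℂ HA]
    [NormedAddCommGroup HB] [InnerProductSpace ℂ HB] [FiniteDimensional ℂ HB]
    (φH : HA →ₗ[ℂ] HB)
    (γA : HA →ₗ[ℂ] HA) (γB : HB →ₗ[ℂ] HB)
    (hγA_sq : γA ∘ₗ γA = LinearMap.id)
    (hγB_sa : LinearMap.adjoint γB = γB) (hγB_sq : γB ∘ₗ γB = LinearMap.id)
    (hcompat : ∀ ψ, φH (γA ψ)
      = (Submodule.orthogonalProjection (LinearMap.range φH) (γB (φH ψ)) : HB)) :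
    (∀ x ∈ LinearMap.range φH, γB x ∈ LinearMap.range φH) ∧
    (∀ x ∈ (LinearMap.range φH)ᗮ, γB x ∈ (LinearMap.range φH)ᗮ) ∧
    (∀ ψ, φH (γA ψ) = γB (φH ψ)) ∧
    (∀ ψ, γA ψ = ψ → γB (φH ψ) = φH ψ) ∧
    (∀ ψ, γA ψ = -ψ → γB (φH ψ) = -(φH ψ)) := by
  have hγB_sym : γB.IsSymmetric :=
    (LinearMap.isSymmetric_iff_isSelfAdjoint γB).2 (LinearMap.isSelfAdjoint_iff'.2 hγB_sa)
  have strong : ∀ ψ, φH (γA ψ) = γB (φH ψ) :=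
    eq_of_eq_starProjection_of_involutive (LinearMap.congr_fun hγA_sq)
      (hγB_sym.norm_map_of_involutive (LinearMap.congr_fun hγB_sq)) hcompat
  have hR : LinearMap.range φH ∈ Module.End.invtSubmodule γB := by
    rintro _ ⟨ψ, rfl⟩
    exact ⟨γA ψ, strong ψ⟩
  refine ⟨fun x hx ↦ hR hx, fun x hx ↦ hγB_sym.orthogonalComplement_mem_invtSubmodule hR hx,
    strong, fun ψ hψ ↦ ?_, fun ψ hψ ↦ ?_⟩
  · rw [← strong, hψ]
  · rw [← strong, hψ, map_neg]

/-- If the gradings `γ_A, γ_B` (self-adjoint involutions) are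
φ-compatible, then `γ_B` preserves `R = Ran φ_H` and `R^⊥` (hence is strongly
φ-compatible with `γ_A`), and `φ_H` maps the `(±1)`-eigenspaces of `γ_A` into the
corresponding eigenspaces of `γ_B`. -/
theorem statement13 {HA HB : Type*}
    [NormedAddCommGroup HA] [InnerProductSpace ℂ HA] [FiniteDimensional ℂ HA]
    [NormedAddCommGroup HB] [InnerProductSpace ℂ HB] [FiniteDimensional ℂ HB]
    (φH : HA →ₗ[ℂ] HB)
    (γA : HA →ₗ[ℂ] HA) (γB : HB →ₗ[ℂ] HB)
    (hγA_sa : LinearMap.adjoint γA = γA) (hγA_sq : γA ∘ₗ γA = LinearMap.id)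
    (hγB_sa : LinearMap.adjoint γB = γB) (hγB_sq : γB ∘ₗ γB = LinearMap.id)
    (hcompat : ∀ ψ, φH (γA ψ)
      = (Submodule.orthogonalProjection (LinearMap.range φH) (γB (φH ψ)) : HB)) :
    (∀ x ∈ LinearMap.range φH, γB x ∈ LinearMap.range φH) ∧
    (∀ x ∈ (LinearMap.range φH)ᗮ, γB x ∈ (LinearMap.range φH)ᗮ) ∧
    (∀ ψ, φH (γA ψ) = γB (φH ψ)) ∧
    (∀ ψ, γA ψ = ψ → γB (φH ψ) = φH ψ) ∧
    (∀ ψ, γA ψ = -ψ → γB (φH ψ) = -(φH ψ)) :=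
  statement13_general φH γA γB hγA_sq hγB_sa hγB_sq hcompat
end

section
/- Let H_A and H_B be finite-dimensional complex Hilbert spaces and φ_H : H_A → H_B an injective linear map, with P the orthogonal projection of H_B onto Ran(φ_H). Let D_A, γ_A be operators on H_A and D_B, γ_B operators on H_B with D_A† = D_A, D_B† = D_B, D_A ≠ 0, γ_A† = γ_A, γ_A² = id, γ_B† = γ_B, γ_B² = id. Let J_A, J_B be antiunitary operators on H_A, H_B with J_A² = ε_A·id, J_B² = ε_B·id, and suppose that for signs ε'_A, ε'_B, ε''_A, ε''_B ∈ {+1,−1} one has J_A D_A = ε'_A D_A J_A, J_B D_B = ε'_B D_B J_B, J_A γ_A = ε''_A γ_A J_A, J_B γ_B = ε''_B γ_B J_B. Assume D_B is φ-compatible with D_A (φ_H ∘ D_A = P ∘ D_B ∘ φ_H), J_B is strongly φ-compatible with J_A (φ_H ∘ J_A = J_B ∘ φ_H), and γ_B is φ-compatible with γ_A (φ_H ∘ γ_A = P ∘ γ_B ∘ φ_H). Then ε_A = ε_B, ε'_A = ε'_B, and ε''_A = ε''_B; that is, the two (even) real spectral triples have the same KO-dimension mod 8. -/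
/-!
Strong compatibility `φ_H ∘ J_A = J_B ∘ φ_H` makes the antiunitary `J_B` map `Ran φ_H` onto
itself, hence also its orthogonal complement, so `J_B` commutes with the projection `P`.
Applying `φ_H` to `J_A D_A ψ = ε'_A D_A J_A ψ` and pushing `J_A` through `φ_H`, `P` and `D_B`
then produces `ε'_B` in front of the same vector `φ_H (D_A J_A ψ)`, which is nonzero for a
suitable `ψ` because `D_A ≠ 0`, `J_A` is surjective and `φ_H` is injective. The same argument
applies to `γ` (nonzero since `γ_A² = id` on a nonzero space), and to `J²` directly.
-/

open Function

section

variable {E F : Type*} [NormedAddCommGroup E] [InnerProductSpace ℂ E]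
  [NormedAddCommGroup F] [InnerProductSpace ℂ F]

theorem Submodule.mapsTo_orthogonal_of_surjOn (K : Submodule ℂ E) (J : E →ₗ⋆[ℂ] E)
    (hJ : ∀ x y, inner ℂ (J x) (J y) = inner ℂ y x) (hK : Set.SurjOn J K K) :
    Set.MapsTo J Kᗮ Kᗮ := by
  intro x hx u hu
  obtain ⟨s, hs, rfl⟩ := hK hu
  rw [hJ]
  exact (K.mem_orthogonal' x).mp hx s hs

theorem Submodule.starProjection_comm_of_surjOn (K : Submodule ℂ E) [K.HasOrthogonalProjection]
    (J : E →ₗ⋆[ℂ] E) (hJ : ∀ x y, inner ℂ (J x) (J y) = inner ℂ y x)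
    (hmaps : Set.MapsTo J K K) (hsurj : Set.SurjOn J K K) (z : E) :
    J (K.starProjection z) = K.starProjection (J z) := by
  refine (K.eq_starProjection_of_mem_orthogonal (hmaps (K.starProjection_apply_mem z)) ?_).symm
  rw [← map_sub]
  exact K.mapsTo_orthogonal_of_surjOn J hJ hsurj (K.sub_starProjection_mem_orthogonal z)

theorem eq_of_ofReal_smul_eq_ofReal_smul {a b : ℝ} {v : F} (hv : v ≠ 0)
    (h : (a : ℂ) • v = (b : ℂ) • v) : a = b :=
  Complex.ofReal_injective (smul_left_injective ℂ hv h)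

section Intertwined

variable (φ : E →ₗ[ℂ] F) (JE : E →ₗ⋆[ℂ] E) (JF : F →ₗ⋆[ℂ] F)

theorem sign_eq_of_sq_eq_smul [Nontrivial E] (hφ : Injective φ)
    (hJ : ∀ ψ, φ (JE ψ) = JF (φ ψ)) {a b : ℝ}
    (ha : ∀ ψ, JE (JE ψ) = (a : ℂ) • ψ) (hb : ∀ ψ, JF (JF ψ) = (b : ℂ) • ψ) : a = b := by
  obtain ⟨χ, hχ⟩ := exists_ne (0 : E)
  refine eq_of_ofReal_smul_eq_ofReal_smul ((map_ne_zero_iff φ hφ).mpr hχ) ?_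
  rw [← hb, ← hJ, ← hJ, ha, map_smul]

theorem sign_eq_of_compatible (hφ : Injective φ) (hJ : ∀ ψ, φ (JE ψ) = JF (φ ψ))
    (hJE : Surjective JE) (Q : F →ₗ[ℂ] F) (hJQ : ∀ z, JF (Q z) = Q (JF z))
    {A : E →ₗ[ℂ] E} {B : F →ₗ[ℂ] F} (hA : A ≠ 0) (hAB : ∀ ψ, φ (A ψ) = Q (B (φ ψ)))
    {a b : ℝ} (ha : ∀ ψ, JE (A ψ) = (a : ℂ) • A (JE ψ))
    (hb : ∀ ψ, JF (B ψ) = (b : ℂ) • B (JF ψ)) : a = b := by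
  obtain ⟨χ, hχ⟩ := DFunLike.ne_iff.mp hA
  obtain ⟨ψ, rfl⟩ := hJE χ
  refine eq_of_ofReal_smul_eq_ofReal_smul ((map_ne_zero_iff φ hφ).mpr hχ) ?_
  calc (a : ℂ) • φ (A (JE ψ)) = φ (JE (A ψ)) := by rw [ha, map_smul]
    _ = (b : ℂ) • φ (A (JE ψ)) := by rw [hJ, hAB, hJQ, hb, map_smul, hAB, hJ]

end Intertwined

end

theorem statement14_general {HA HB : Type*}
    [NormedAddCommGroup HA] [InnerProductSpace ℂ HA]
    [NormedAddCommGroup HB] [InnerProductSpace ℂ HB] [FiniteDimensional ℂ HB]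
    (φH : HA →ₗ[ℂ] HB) (hφH_inj : Function.Injective φH)
    (DA : HA →ₗ[ℂ] HA) (DB : HB →ₗ[ℂ] HB)
    (hDA_ne : DA ≠ 0)
    (γA : HA →ₗ[ℂ] HA) (γB : HB →ₗ[ℂ] HB)
    (hγA_sq : γA ∘ₗ γA = LinearMap.id)
    (JA : HA →ₗ⋆[ℂ] HA) (JB : HB →ₗ⋆[ℂ] HB)
    (hJA_bij : Function.Bijective JA)
    (hJB_anti : ∀ ψ₁ ψ₂ : HB, (inner ℂ (JB ψ₁) (JB ψ₂) : ℂ) = inner ℂ ψ₂ ψ₁)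
    (εA εB ε'A ε'B ε''A ε''B : ℝ)
    (hJA2 : ∀ ψ, JA (JA ψ) = (εA : ℂ) • ψ)
    (hJB2 : ∀ ψ, JB (JB ψ) = (εB : ℂ) • ψ)
    (hJADA : ∀ ψ, JA (DA ψ) = (ε'A : ℂ) • DA (JA ψ))
    (hJBDB : ∀ ψ, JB (DB ψ) = (ε'B : ℂ) • DB (JB ψ))
    (hJAγA : ∀ ψ, JA (γA ψ) = (ε''A : ℂ) • γA (JA ψ))
    (hJBγB : ∀ ψ, JB (γB ψ) = (ε''B : ℂ) • γB (JB ψ))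
    (hD_compat : ∀ ψ, φH (DA ψ)
      = (Submodule.orthogonalProjection (LinearMap.range φH) (DB (φH ψ)) : HB))
    (hJ_strong : ∀ ψ, φH (JA ψ) = JB (φH ψ))
    (hγ_compat : ∀ ψ, φH (γA ψ)
      = (Submodule.orthogonalProjection (LinearMap.range φH) (γB (φH ψ)) : HB)) :
    εA = εB ∧ ε'A = ε'B ∧ ε''A = ε''B := by
  have : Nontrivial HA := by
    by_contra h
    rw [not_nontrivial_iff_subsingleton] at h
    exact hDA_ne (Subsingleton.elim _ _)
  have hγA_ne : γA ≠ 0 := by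
    rintro rfl
    have h : (LinearMap.id : Module.End ℂ HA) = 0 := by simpa [eq_comm] using hγA_sq
    exact one_ne_zero h
  set K := LinearMap.range φH
  have hmaps : Set.MapsTo JB K K := by
    rintro _ ⟨ψ, rfl⟩
    exact ⟨JA ψ, hJ_strong ψ⟩
  have hsurj : Set.SurjOn JB K K := by
    rintro _ ⟨ψ, rfl⟩
    obtain ⟨χ, rfl⟩ := hJA_bij.2 ψ
    exact ⟨φH χ, ⟨χ, rfl⟩, (hJ_strong χ).symm⟩
  have hJP := K.starProjection_comm_of_surjOn JB hJB_anti hmaps hsurj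
  exact ⟨sign_eq_of_sq_eq_smul φH JA JB hφH_inj hJ_strong hJA2 hJB2,
    sign_eq_of_compatible φH JA JB hφH_inj hJ_strong hJA_bij.2 K.starProjection hJP hDA_ne
      hD_compat hJADA hJBDB,
    sign_eq_of_compatible φH JA JB hφH_inj hJ_strong hJA_bij.2 K.starProjection hJP hγA_ne
      hγ_compat hJAγA hJBγB⟩

/-- Two (even) real spectral triples related by an injective φ-compatible
map `φ_H` — with `D_B` φ-compatible with `D_A` (`D_A ≠ 0`), `J_B` strongly φ-compatible with
`J_A`, and `γ_B` φ-compatible with `γ_A` — have the same KO-dimension mod 8, i.e. the signs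
`(ε, ε', ε'')` coincide. -/
theorem statement14 {HA HB : Type*}
    [NormedAddCommGroup HA] [InnerProductSpace ℂ HA] [FiniteDimensional ℂ HA]
    [NormedAddCommGroup HB] [InnerProductSpace ℂ HB] [FiniteDimensional ℂ HB]
    (φH : HA →ₗ[ℂ] HB) (hφH_inj : Function.Injective φH)
    (DA : HA →ₗ[ℂ] HA) (DB : HB →ₗ[ℂ] HB)
    (hDA_sa : LinearMap.adjoint DA = DA) (hDB_sa : LinearMap.adjoint DB = DB)
    (hDA_ne : DA ≠ 0)
    (γA : HA →ₗ[ℂ] HA) (γB : HB →ₗ[ℂ] HB)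
    (hγA_sa : LinearMap.adjoint γA = γA) (hγA_sq : γA ∘ₗ γA = LinearMap.id)
    (hγB_sa : LinearMap.adjoint γB = γB) (hγB_sq : γB ∘ₗ γB = LinearMap.id)
    (JA : HA →ₗ⋆[ℂ] HA) (JB : HB →ₗ⋆[ℂ] HB)
    (hJA_bij : Function.Bijective JA) (hJB_bij : Function.Bijective JB)
    (hJA_anti : ∀ ψ₁ ψ₂ : HA, (inner ℂ (JA ψ₁) (JA ψ₂) : ℂ) = inner ℂ ψ₂ ψ₁)
    (hJB_anti : ∀ ψ₁ ψ₂ : HB, (inner ℂ (JB ψ₁) (JB ψ₂) : ℂ) = inner ℂ ψ₂ ψ₁)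
    (εA εB ε'A ε'B ε''A ε''B : ℝ)
    (hεA : εA = 1 ∨ εA = -1) (hεB : εB = 1 ∨ εB = -1)
    (hε'A : ε'A = 1 ∨ ε'A = -1) (hε'B : ε'B = 1 ∨ ε'B = -1)
    (hε''A : ε''A = 1 ∨ ε''A = -1) (hε''B : ε''B = 1 ∨ ε''B = -1)
    (hJA2 : ∀ ψ, JA (JA ψ) = (εA : ℂ) • ψ)
    (hJB2 : ∀ ψ, JB (JB ψ) = (εB : ℂ) • ψ)
    (hJADA : ∀ ψ, JA (DA ψ) = (ε'A : ℂ) • DA (JA ψ))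
    (hJBDB : ∀ ψ, JB (DB ψ) = (ε'B : ℂ) • DB (JB ψ))
    (hJAγA : ∀ ψ, JA (γA ψ) = (ε''A : ℂ) • γA (JA ψ))
    (hJBγB : ∀ ψ, JB (γB ψ) = (ε''B : ℂ) • γB (JB ψ))
    (hD_compat : ∀ ψ, φH (DA ψ)
      = (Submodule.orthogonalProjection (LinearMap.range φH) (DB (φH ψ)) : HB))
    (hJ_strong : ∀ ψ, φH (JA ψ) = JB (φH ψ))
    (hγ_compat : ∀ ψ, φH (γA ψ)
      = (Submodule.orthogonalProjection (LinearMap.range φH) (γB (φH ψ)) : HB)) :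
    εA = εB ∧ ε'A = ε'B ∧ ε''A = ε''B :=
  statement14_general φH hφH_inj DA DB hDA_ne γA γB hγA_sq JA JB hJA_bij hJB_anti εA εB ε'A ε'B ε''A
    ε''B hJA2 hJB2 hJADA hJBDB hJAγA hJBγB hD_compat hJ_strong hγ_compat
end

section
/- Let A be a unital complex *-algebra and B a unital complex *-algebra, let π_A : A → End(H_A) and π_B : B → End(H_B) be *-representations on finite-dimensional complex Hilbert spaces with π_A(1_A) = id, let φ : A → B be a *-homomorphism (linear, multiplicative, star-preserving, not necessarily unital), and let φ_H : H_A → H_B be a linear map that is φ-compatible: φ_H(π_A(a)ψ) = π_B(φ(a)) φ_H(ψ) for all a ∈ A, ψ ∈ H_A. Let P be the orthogonal projection of H_B onto Ran(φ_H), and let D_A, D_B be operators on H_A, H_B such that D_B is φ-compatible with D_A, i.e. φ_H ∘ D_A = P ∘ D_B ∘ φ_H. Then for all a⁰, a¹ ∈ A, the operator π_B(φ(a⁰))·[D_B, π_B(φ(a¹))] − π_B(φ(a⁰a¹))·[D_B, π_B(φ(1_A))] on H_B is φ-compatible with the operator π_A(a⁰)·[D_A, π_A(a¹)] on H_A. 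-/
/-!
Since `φ_H` intertwines `π_A(a)` with `π_B(φ(a))` for every `a`, and
`π_B(φ(a))† = π_B(φ(a*))`, the range of `φ_H` reduces every `π_B(φ(a))`, so the projection `P`
commutes with all of them. Compatibility survives differences and composition with an
intertwined pair on either side (on the left the pair must also commute with `P`), so
`π_B(φ(a)) [D_B, π_B(φ(b))]` is compatible with `π_A(a) [D_A, π_A(b)]`. For `b = 1` the latter
vanishes because `π_A(1) = id`.
-/

open Module.End LinearMap

theorem LinearMap.range_mem_invtSubmodule_of_intertwines {R M N : Type*} [Semiring R]
    [AddCommMonoid M] [Module R M] [AddCommMonoid N] [Module R N] {φ : M →ₗ[R] N}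
    {S : M →ₗ[R] M} {T : N →ₗ[R] N} (h : ∀ x, φ (S x) = T (φ x)) :
    range φ ∈ invtSubmodule T := by
  rw [mem_invtSubmodule_iff_forall_mem_of_mem]
  rintro _ ⟨x, rfl⟩
  exact ⟨S x, h x⟩

section

variable {𝕜 E F : Type*} [RCLike 𝕜]
  [NormedAddCommGroup E] [InnerProductSpace 𝕜 E]
  [NormedAddCommGroup F] [InnerProductSpace 𝕜 F]

theorem Submodule.commute_starProjection_of_mem_invtSubmodule [FiniteDimensional 𝕜 E]
    {K : Submodule 𝕜 E} {T : E →ₗ[𝕜] E} (hT : K ∈ invtSubmodule T)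
    (hT' : K ∈ invtSubmodule T.adjoint) :
    Commute (K.starProjection : E →ₗ[𝕜] E) T :=
  (LinearMap.IsIdempotentElem.commute_iff
    (ContinuousLinearMap.IsIdempotentElem.toLinearMap K.isIdempotentElem_starProjection)).mpr
    ⟨by simpa using hT, by simpa using mem_invtSubmodule_adjoint_iff.mp hT'⟩

def IsCompatible (φ : E →ₗ[𝕜] F) [(range φ).HasOrthogonalProjection] (TA : E →ₗ[𝕜] E)
    (TB : F →ₗ[𝕜] F) : Prop :=
  ∀ ψ, φ (TA ψ) = (range φ).starProjection (TB (φ ψ))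

namespace IsCompatible

variable {φ : E →ₗ[𝕜] F} [(range φ).HasOrthogonalProjection] {TA SA : E →ₗ[𝕜] E}
  {TB SB : F →ₗ[𝕜] F}

theorem sub (hT : IsCompatible φ TA TB) (hS : IsCompatible φ SA SB) :
    IsCompatible φ (TA - SA) (TB - SB) := fun ψ ↦ by
  simp only [LinearMap.sub_apply, map_sub, hT ψ, hS ψ]

theorem comp_right (hT : IsCompatible φ TA TB) (hS : ∀ ψ, φ (SA ψ) = SB (φ ψ)) :
    IsCompatible φ (TA ∘ₗ SA) (TB ∘ₗ SB) := fun ψ ↦ by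
  rw [comp_apply, comp_apply, hT, hS]

theorem comp_left (hT : IsCompatible φ TA TB) (hS : ∀ ψ, φ (SA ψ) = SB (φ ψ))
    (hP : Commute ((range φ).starProjection : F →ₗ[𝕜] F) SB) :
    IsCompatible φ (SA ∘ₗ TA) (SB ∘ₗ TB) := fun ψ ↦ by
  have hPSB : (range φ).starProjection (SB (TB (φ ψ)))
      = SB ((range φ).starProjection (TB (φ ψ))) :=
    LinearMap.congr_fun hP.eq (TB (φ ψ))
  rw [comp_apply, comp_apply, hPSB, ← hT, hS]

end IsCompatible

end

theorem statement16_general {A B : Type*}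
    [Ring A] [Algebra ℂ A] [StarRing A]
    [Ring B] [Algebra ℂ B] [StarRing B]
    {HA HB : Type*}
    [NormedAddCommGroup HA] [InnerProductSpace ℂ HA]
    [NormedAddCommGroup HB] [InnerProductSpace ℂ HB] [FiniteDimensional ℂ HB]
    (πA : A →ₗ[ℂ] (HA →ₗ[ℂ] HA)) (πB : B →ₗ[ℂ] (HB →ₗ[ℂ] HB))
    (hπA_one : πA 1 = LinearMap.id)
    (hπB_star : ∀ x, πB (star x) = LinearMap.adjoint (πB x))
    (φ : A →ₗ[ℂ] B)
    (hφ_star : ∀ x, φ (star x) = star (φ x))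
    (φH : HA →ₗ[ℂ] HB)
    (hφH : ∀ a ψ, φH (πA a ψ) = πB (φ a) (φH ψ))
    (DA : HA →ₗ[ℂ] HA) (DB : HB →ₗ[ℂ] HB)
    (hD : ∀ ψ, φH (DA ψ)
      = (Submodule.orthogonalProjection (LinearMap.range φH) (DB (φH ψ)) : HB)) :
    ∀ (a₀ a₁ : A) (ψ : HA),
      φH ((πA a₀ ∘ₗ (DA ∘ₗ πA a₁ - πA a₁ ∘ₗ DA)) ψ)
        = (Submodule.orthogonalProjection (LinearMap.range φH)
            (((πB (φ a₀) ∘ₗ (DB ∘ₗ πB (φ a₁) - πB (φ a₁) ∘ₗ DB))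
              - (πB (φ (a₀ * a₁)) ∘ₗ (DB ∘ₗ πB (φ 1) - πB (φ 1) ∘ₗ DB))) (φH ψ)) : HB) := by
  intro a₀ a₁ ψ
  have hP (a : A) : Commute ((range φH).starProjection : HB →ₗ[ℂ] HB) (πB (φ a)) :=
    Submodule.commute_starProjection_of_mem_invtSubmodule
      (range_mem_invtSubmodule_of_intertwines (hφH a))
      (by
        rw [← hπB_star, ← hφ_star]
        exact range_mem_invtSubmodule_of_intertwines (hφH (star a)))
  have hDcompat : IsCompatible φH DA DB := hD
  have hcommutator (a b : A) : IsCompatible φH (πA a ∘ₗ (DA ∘ₗ πA b - πA b ∘ₗ DA))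
      (πB (φ a) ∘ₗ (DB ∘ₗ πB (φ b) - πB (φ b) ∘ₗ DB)) :=
    ((hDcompat.comp_right (hφH b)).sub (hDcompat.comp_left (hφH b) (hP b))).comp_left
      (hφH a) (hP a)
  have h := (hcommutator a₀ a₁).sub (hcommutator (a₀ * a₁) 1) ψ
  simp only [hπA_one, comp_id, id_comp, sub_self, comp_zero, sub_zero] at h
  exact h

/-- If `φ_H` is φ-compatible for a *-homomorphism `φ : A → B` between
unital complex *-algebras (with `π_A` unital), and `D_B` is φ-compatible with `D_A`, then
the represented image of the universal one-form `a⁰ d_U a¹`, namely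
`π_B(φ(a⁰)) [D_B, π_B(φ(a¹))] − π_B(φ(a⁰a¹)) [D_B, π_B(φ(1))]`, is φ-compatible with
`π_A(a⁰) [D_A, π_A(a¹)]`. -/
theorem statement16 {A B : Type*}
    [Ring A] [Algebra ℂ A] [StarRing A]
    [Ring B] [Algebra ℂ B] [StarRing B]
    {HA HB : Type*}
    [NormedAddCommGroup HA] [InnerProductSpace ℂ HA] [FiniteDimensional ℂ HA]
    [NormedAddCommGroup HB] [InnerProductSpace ℂ HB] [FiniteDimensional ℂ HB]
    (πA : A →ₗ[ℂ] (HA →ₗ[ℂ] HA)) (πB : B →ₗ[ℂ] (HB →ₗ[ℂ] HB))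
    (hπA_mul : ∀ x y, πA (x * y) = πA x ∘ₗ πA y)
    (hπA_star : ∀ x, πA (star x) = LinearMap.adjoint (πA x))
    (hπA_one : πA 1 = LinearMap.id)
    (hπB_mul : ∀ x y, πB (x * y) = πB x ∘ₗ πB y)
    (hπB_star : ∀ x, πB (star x) = LinearMap.adjoint (πB x))
    (φ : A →ₗ[ℂ] B)
    (hφ_mul : ∀ x y, φ (x * y) = φ x * φ y)
    (hφ_star : ∀ x, φ (star x) = star (φ x))
    (φH : HA →ₗ[ℂ] HB)
    (hφH : ∀ a ψ, φH (πA a ψ) = πB (φ a) (φH ψ))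
    (DA : HA →ₗ[ℂ] HA) (DB : HB →ₗ[ℂ] HB)
    (hD : ∀ ψ, φH (DA ψ)
      = (Submodule.orthogonalProjection (LinearMap.range φH) (DB (φH ψ)) : HB)) :
    ∀ (a₀ a₁ : A) (ψ : HA),
      φH ((πA a₀ ∘ₗ (DA ∘ₗ πA a₁ - πA a₁ ∘ₗ DA)) ψ)
        = (Submodule.orthogonalProjection (LinearMap.range φH)
            (((πB (φ a₀) ∘ₗ (DB ∘ₗ πB (φ a₁) - πB (φ a₁) ∘ₗ DB))
              - (πB (φ (a₀ * a₁)) ∘ₗ (DB ∘ₗ πB (φ 1) - πB (φ 1) ∘ₗ DB))) (φH ψ)) : HB) :=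
  statement16_general πA πB hπA_one hπB_star φ hφ_star φH hφH DA DB hD
end

section
/- Let H_A and H_B be finite-dimensional complex Hilbert spaces and let φ_H : H_A → H_B be an isometric linear map (⟨φ_H ψ, φ_H ψ'⟩ = ⟨ψ, ψ'⟩ for all ψ, ψ' ∈ H_A). Let P be the orthogonal projection of H_B onto Ran(φ_H). For i = 1, …, n, let Bᵢ be an operator on H_B that is φ-compatible with an operator Aᵢ on H_A, i.e. φ_H ∘ Aᵢ = P ∘ Bᵢ ∘ φ_H. Then for all ψ₁, ψ₂ ∈ H_A: ⟨φ_H ψ₁, B₁ P B₂ P ⋯ P Bₙ (φ_H ψ₂)⟩ = ⟨ψ₁, A₁ A₂ ⋯ Aₙ ψ₂⟩. -/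
/-! Since `P` fixes `Ran φ` and `φ Aᵢ = P Bᵢ φ`, induction on `n` gives
`P B₁ P ⋯ P Bₙ φ ψ = φ A₁ ⋯ Aₙ ψ`. The outermost `P` is free against `φ ψ₁`, because `P` is
self-adjoint and fixes `φ ψ₁`, and the isometry turns the inner product back into one on `H_A`. -/

/-- `interleaveP P [B₁, …, Bₙ] = B₁ ∘ P ∘ B₂ ∘ P ∘ ⋯ ∘ P ∘ Bₙ` (identity for the empty
list): the product of the `Bᵢ` with the projection `P` interleaved. -/
def interleaveP {E : Type*} [AddCommGroup E] [Module ℂ E]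
    (P : E →ₗ[ℂ] E) : List (E →ₗ[ℂ] E) → (E →ₗ[ℂ] E)
  | [] => LinearMap.id
  | [B] => B
  | B :: C :: rest => B ∘ₗ P ∘ₗ interleaveP P (C :: rest)

/-- `composeAll [A₁, …, Aₙ] = A₁ ∘ A₂ ∘ ⋯ ∘ Aₙ`. -/
def composeAll {E : Type*} [AddCommGroup E] [Module ℂ E] :
    List (E →ₗ[ℂ] E) → (E →ₗ[ℂ] E)
  | [] => LinearMap.id
  | A :: rest => A ∘ₗ composeAll rest

theorem interleaveP_cons_apply_of_fixed {E : Type*} [AddCommGroup E] [Module ℂ E]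
    (P : E →ₗ[ℂ] E) (B : E →ₗ[ℂ] E) (l : List (E →ₗ[ℂ] E)) {x : E} (hx : P x = x) :
    interleaveP P (B :: l) x = B (P (interleaveP P l x)) := by
  cases l with
  | nil => simp [interleaveP, hx]
  | cons C rest => rfl

section

variable {HA HB : Type*} [NormedAddCommGroup HA] [InnerProductSpace ℂ HA]
  [NormedAddCommGroup HB] [InnerProductSpace ℂ HB]
  (K : Submodule ℂ HB) [K.HasOrthogonalProjection] (φ : HA →ₗ[ℂ] HB)

theorem starProjection_interleaveP_apply (hφ : LinearMap.range φ ≤ K) {n : ℕ}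
    (A : Fin n → (HA →ₗ[ℂ] HA)) (B : Fin n → (HB →ₗ[ℂ] HB))
    (hcompat : ∀ i ψ, φ (A i ψ) = K.starProjection (B i (φ ψ))) (ψ : HA) :
    K.starProjection (interleaveP K.starProjection (List.ofFn B) (φ ψ))
      = φ (composeAll (List.ofFn A) ψ) := by
  have hfix : ∀ ψ, K.starProjection (φ ψ) = φ ψ := fun ψ ↦
    K.starProjection_eq_self_iff.mpr (hφ (LinearMap.mem_range_self φ ψ))
  induction n generalizing ψ with
  | zero => exact hfix ψ
  | succ n ih =>
    rw [List.ofFn_succ, List.ofFn_succ, interleaveP_cons_apply_of_fixed _ _ _ (hfix ψ),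
      ContinuousLinearMap.coe_coe,
      ih (fun i ↦ A i.succ) (fun i ↦ B i.succ) (fun i ↦ hcompat i.succ), composeAll,
      LinearMap.comp_apply, hcompat]

theorem inner_interleaveP_eq_inner_composeAll
    (hiso : ∀ ψ ψ' : HA, (inner ℂ (φ ψ) (φ ψ') : ℂ) = inner ℂ ψ ψ')
    (hφ : LinearMap.range φ ≤ K) {n : ℕ}
    (A : Fin n → (HA →ₗ[ℂ] HA)) (B : Fin n → (HB →ₗ[ℂ] HB))
    (hcompat : ∀ i ψ, φ (A i ψ) = K.starProjection (B i (φ ψ))) (ψ₁ ψ₂ : HA) :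
    inner ℂ (φ ψ₁) (interleaveP K.starProjection (List.ofFn B) (φ ψ₂))
      = inner ℂ ψ₁ (composeAll (List.ofFn A) ψ₂) := by
  rw [← hiso, ← starProjection_interleaveP_apply K φ hφ A B hcompat,
    ← K.inner_starProjection_left_eq_right,
    K.starProjection_eq_self_iff.mpr (hφ (LinearMap.mem_range_self φ ψ₁))]

end

theorem statement18_general {HA HB : Type*}
    [NormedAddCommGroup HA] [InnerProductSpace ℂ HA] [FiniteDimensional ℂ HA]
    [NormedAddCommGroup HB] [InnerProductSpace ℂ HB]
    (φH : HA →ₗ[ℂ] HB)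
    (hiso : ∀ ψ ψ' : HA, (inner ℂ (φH ψ) (φH ψ') : ℂ) = inner ℂ ψ ψ')
    (n : ℕ) (A : Fin n → (HA →ₗ[ℂ] HA)) (B : Fin n → (HB →ₗ[ℂ] HB))
    (hcompat : ∀ i ψ, φH (A i ψ)
      = ((LinearMap.range φH).orthogonalProjection (B i (φH ψ)) : HB))
    (ψ₁ ψ₂ : HA) :
    (inner ℂ (φH ψ₁)
      (interleaveP
        ((LinearMap.range φH).subtype ∘ₗ
          ((LinearMap.range φH).orthogonalProjection).toLinearMap)
        (List.ofFn B) (φH ψ₂)) : ℂ)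
      = inner ℂ ψ₁ (composeAll (List.ofFn A) ψ₂) :=
  -- both the projection `P` and `hcompat` are `starProjection` up to definitional unfolding
  inner_interleaveP_eq_inner_composeAll _ φH hiso le_rfl A B hcompat ψ₁ ψ₂

/-- For an isometric `φ_H` and operators `Bᵢ` φ-compatible with `Aᵢ`,
the matrix elements between inherited vectors of `B₁ P B₂ P ⋯ P Bₙ` coincide with those
of `A₁ A₂ ⋯ Aₙ`, where `P` is the orthogonal projection onto `Ran φ_H`. -/
theorem statement18 {HA HB : Type*}
    [NormedAddCommGroup HA] [InnerProductSpace ℂ HA] [FiniteDimensional ℂ HA]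
    [NormedAddCommGroup HB] [InnerProductSpace ℂ HB] [FiniteDimensional ℂ HB]
    (φH : HA →ₗ[ℂ] HB)
    (hiso : ∀ ψ ψ' : HA, (inner ℂ (φH ψ) (φH ψ') : ℂ) = inner ℂ ψ ψ')
    (n : ℕ) (A : Fin n → (HA →ₗ[ℂ] HA)) (B : Fin n → (HB →ₗ[ℂ] HB))
    (hcompat : ∀ i ψ, φH (A i ψ)
      = ((LinearMap.range φH).orthogonalProjection (B i (φH ψ)) : HB))
    (ψ₁ ψ₂ : HA) :
    (inner ℂ (φH ψ₁)
      (interleaveP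
        ((LinearMap.range φH).subtype ∘ₗ
          ((LinearMap.range φH).orthogonalProjection).toLinearMap)
        (List.ofFn B) (φH ψ₂)) : ℂ)
      = inner ℂ ψ₁ (composeAll (List.ofFn A) ψ₂) :=
  statement18_general φH hiso n A B hcompat ψ₁ ψ₂
end

section
/- Let H_A and H_B be finite-dimensional complex Hilbert spaces and let φ_H : H_A → H_B be an isometric linear map (⟨φ_H ψ, φ_H ψ'⟩ = ⟨ψ, ψ'⟩ for all ψ, ψ' ∈ H_A). Let P be the orthogonal projection of H_B onto Ran(φ_H). For i = 1, …, n, let Bᵢ be an operator on H_B that is φ-compatible with an operator Aᵢ on H_A, i.e. φ_H ∘ Aᵢ = P ∘ Bᵢ ∘ φ_H. Then Tr_{H_B}(P B₁ P B₂ P ⋯ P Bₙ P) = Tr_{H_A}(A₁ A₂ ⋯ Aₙ). -/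
theorem List.forall₂_ofFn {α β : Type*} {R : α → β → Prop} {n : ℕ} {f : Fin n → α}
    {g : Fin n → β} (h : ∀ i, R (f i) (g i)) : List.Forall₂ R (List.ofFn f) (List.ofFn g) :=
  List.forall₂_iff_get.mpr ⟨by simp, fun _ _ _ => by simpa using h _⟩

theorem comp_interleaveP_comp_of_forall₂ {E F : Type*} [AddCommGroup E] [Module ℂ E]
    [AddCommGroup F] [Module ℂ F] {φ : E →ₗ[ℂ] F} {P : F →ₗ[ℂ] F}
    (hPφ : P ∘ₗ φ = φ) {lA : List (E →ₗ[ℂ] E)} {lB : List (F →ₗ[ℂ] F)}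
    (h : List.Forall₂ (fun a b => φ ∘ₗ a = P ∘ₗ b ∘ₗ φ) lA lB) :
    P ∘ₗ interleaveP P lB ∘ₗ φ = φ ∘ₗ composeAll lA := by
  induction h with
  | nil => simpa [interleaveP, composeAll] using hPφ
  | cons hab htail ih =>
    cases htail with
    | nil => simp [interleaveP, composeAll, hab]
    | cons =>
      simp only [interleaveP, composeAll, LinearMap.comp_assoc] at ih ⊢
      rw [ih]
      simp only [← LinearMap.comp_assoc, hab]

theorem LinearMap.trace_comp_comp_eq_of_comp_eq {K E F : Type*} [Field K]
    [AddCommGroup E] [Module K E] [FiniteDimensional K E]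
    [AddCommGroup F] [Module K F] [FiniteDimensional K F]
    {φ : E →ₗ[K] F} (hφ : Function.Injective φ) {P : F →ₗ[K] F}
    (hrange : LinearMap.range P ≤ LinearMap.range φ) (hPφ : P ∘ₗ φ = φ)
    {T : F →ₗ[K] F} {M : E →ₗ[K] E} (h : P ∘ₗ T ∘ₗ φ = φ ∘ₗ M) :
    LinearMap.trace K F (P ∘ₗ T ∘ₗ P) = LinearMap.trace K E M := by
  obtain ⟨ψ, hψ⟩ := φ.exists_leftInverse_of_injective (LinearMap.ker_eq_bot.mpr hφ)
  have hP : φ ∘ₗ ψ ∘ₗ P = P := by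
    ext x
    obtain ⟨y, hy⟩ := hrange (LinearMap.mem_range_self P x)
    simp [← hy, ← LinearMap.comp_apply ψ φ, hψ]
  calc LinearMap.trace K F (P ∘ₗ T ∘ₗ P)
      = LinearMap.trace K F (φ ∘ₗ ψ ∘ₗ P ∘ₗ T ∘ₗ P) := by
        nth_rewrite 1 [← hP]; simp only [LinearMap.comp_assoc]
    _ = LinearMap.trace K E (ψ ∘ₗ P ∘ₗ T ∘ₗ P ∘ₗ φ) := by
        rw [LinearMap.trace_comp_comm']; simp only [LinearMap.comp_assoc]
    _ = LinearMap.trace K E M := by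
        rw [hPφ, h, ← LinearMap.comp_assoc, hψ, LinearMap.id_comp]

/-- For an isometric `φ_H` and operators `Bᵢ` φ-compatible with `Aᵢ`,
`Tr_{H_B}(P B₁ P B₂ P ⋯ P Bₙ P) = Tr_{H_A}(A₁ A₂ ⋯ Aₙ)`, where `P` is the orthogonal
projection onto `Ran φ_H`. -/
theorem statement19 {HA HB : Type*}
    [NormedAddCommGroup HA] [InnerProductSpace ℂ HA] [FiniteDimensional ℂ HA]
    [NormedAddCommGroup HB] [InnerProductSpace ℂ HB] [FiniteDimensional ℂ HB]
    (φH : HA →ₗ[ℂ] HB)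
    (hiso : ∀ ψ ψ' : HA, (inner ℂ (φH ψ) (φH ψ') : ℂ) = inner ℂ ψ ψ')
    (n : ℕ) (A : Fin n → (HA →ₗ[ℂ] HA)) (B : Fin n → (HB →ₗ[ℂ] HB))
    (hcompat : ∀ i ψ, φH (A i ψ)
      = (Submodule.orthogonalProjection (LinearMap.range φH) (B i (φH ψ)) : HB)) :
    LinearMap.trace ℂ HB
        (((LinearMap.range φH).subtype ∘ₗ
            (Submodule.orthogonalProjection (LinearMap.range φH)).toLinearMap) ∘ₗ
          interleaveP
            ((LinearMap.range φH).subtype ∘ₗ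
              (Submodule.orthogonalProjection (LinearMap.range φH)).toLinearMap)
            (List.ofFn B) ∘ₗ
          ((LinearMap.range φH).subtype ∘ₗ
            (Submodule.orthogonalProjection (LinearMap.range φH)).toLinearMap))
      = LinearMap.trace ℂ HA (composeAll (List.ofFn A)) := by
  set R := LinearMap.range φH
  set P : HB →ₗ[ℂ] HB := R.subtype ∘ₗ (R.orthogonalProjectionOnto).toLinearMap
  have hPφ : P ∘ₗ φH = φH := by
    ext ψ
    simp [P, R.orthogonalProjectionOnto_mem_subspace_eq_self ⟨φH ψ, LinearMap.mem_range_self φH ψ⟩]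
  have hrange : LinearMap.range P ≤ R :=
    (LinearMap.range_comp_le_range _ _).trans R.range_subtype.le
  have hcompat_comp : ∀ i, φH ∘ₗ A i = P ∘ₗ B i ∘ₗ φH := fun i => LinearMap.ext (hcompat i)
  exact LinearMap.trace_comp_comp_eq_of_comp_eq (φH.isometryOfInner hiso).injective hrange hPφ
    (comp_interleaveP_comp_of_forall₂ hPφ (List.forall₂_ofFn hcompat_comp))
end
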